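/- (Converse direction used in the proof of Lemma 1.1: a contracting one-parameter subgroup forces triviality of the invariant ring.) Assume K is an infinite field. Suppose there exists λ : Fin r → ℤ such that ∑ j, w i j * λ j > 0 for every i : Fin m. Then every invariant polynomial is constant: every semi-invariant f ∈ MvPolynomial (Fin m) K of weight 0 satisfies f = MvPolynomial.C (MvPolynomial.coeff 0 f). -/

import Mathlib

/-!
Along the one-parameter subgroup `t = c ^ lam` the torus acts by `x i ↦ c ^ n i * x i` with all
`n i = ∑ j, w i j * lam j > 0`. For fixed `x`, `c ↦ f (c ^ n • x)` is a polynomial in `c`; by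
invariance it equals `f x` at the infinitely many `c ≠ 0`, hence everywhere, and at `c = 0`
this gives `f x = f 0`.
-/

theorem Finset.prod_zpow_eq_zpow_sum {G ι : Type*} [CommGroup G] (s : Finset ι) (f : ι → ℤ)
    (a : G) : ∏ i ∈ s, a ^ f i = a ^ ∑ i ∈ s, f i := by
  induction s using Finset.cons_induction with
  | empty => simp
  | cons j s hj ih => rw [Finset.prod_cons, Finset.sum_cons, ih, zpow_add]

namespace MvPolynomial

variable {σ K : Type*} [Field K]

theorem eval_pow_mul_eq_eval_aeval (f : MvPolynomial σ K) (n : σ → ℕ) (x : σ → K) (c : K) :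
    eval (fun i => c ^ n i * x i) f =
      (aeval (fun i => Polynomial.X ^ n i * Polynomial.C (x i)) f).eval c := by
  rw [← Polynomial.coe_aeval_eq_eval, ← AlgHom.comp_apply, comp_aeval]
  simp only [map_mul, map_pow, Polynomial.aeval_X, Polynomial.aeval_C, Algebra.algebraMap_self,
    RingHom.id_apply, aeval_eq_eval]

theorem eval_eq_constantCoeff_of_forall_eval_pow_mul_eq [Infinite K] {f : MvPolynomial σ K}
    {n : σ → ℕ} (hn : ∀ i, n i ≠ 0)
    (hf : ∀ c : K, c ≠ 0 → ∀ x, eval (fun i => c ^ n i * x i) f = eval x f) (x : σ → K) :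
    eval x f = constantCoeff f := by
  have hp : aeval (fun i => Polynomial.X ^ n i * Polynomial.C (x i)) f =
      Polynomial.C (eval x f) := by
    refine Polynomial.eq_of_infinite_eval_eq _ _ (Set.infinite_of_finite_compl ?_)
    refine (Set.finite_singleton (0 : K)).subset fun c hc => ?_
    by_contra hc0
    exact hc <| by rw [Set.mem_ofPred_eq, ← eval_pow_mul_eq_eval_aeval, Polynomial.eval_C,
      hf c hc0]
  have h0 := eval_pow_mul_eq_eval_aeval f n x 0
  simp only [zero_pow (hn _), zero_mul, hp, Polynomial.eval_C] at h0
  rw [← h0, ← Pi.zero_def, eval_zero]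

theorem eq_C_coeff_zero_of_forall_eval_pow_mul_eq [Infinite K] {f : MvPolynomial σ K}
    {n : σ → ℕ} (hn : ∀ i, n i ≠ 0)
    (hf : ∀ c : K, c ≠ 0 → ∀ x, eval (fun i => c ^ n i * x i) f = eval x f) :
    f = C (coeff 0 f) :=
  funext fun x => by
    rw [eval_C, eval_eq_constantCoeff_of_forall_eval_pow_mul_eq hn hf, constantCoeff_eq]

end MvPolynomial

theorem invariants_constant_of_contracting_ops_general (K : Type*) [Field K] [Infinite K]
    (m r : ℕ) (w : Fin m → (Fin r → ℤ))
    (lam : Fin r → ℤ) (hlam : ∀ i : Fin m, (∑ j, w i j * lam j) > 0)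
    (f : MvPolynomial (Fin m) K)
    (hf : ∀ (t : Fin r → Kˣ) (x : Fin m → K),
      MvPolynomial.eval (fun i => ((∏ j, (t j) ^ (w i j) : Kˣ) : K) * x i) f
        = ((∏ j, (t j) ^ ((0 : Fin r → ℤ) j) : Kˣ) : K) * MvPolynomial.eval x f) :
    f = MvPolynomial.C (MvPolynomial.coeff 0 f) := by
  refine MvPolynomial.eq_C_coeff_zero_of_forall_eval_pow_mul_eq
    (n := fun i => (∑ j, w i j * lam j).toNat) (fun i => by have := hlam i; omega) ?_
  intro c hc x
  have hc_pow : ∀ i, ((∏ j, (Units.mk0 c hc ^ lam j) ^ w i j : Kˣ) : K)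
      = c ^ (∑ j, w i j * lam j).toNat := fun i => by
    simp_rw [← zpow_mul, Finset.prod_zpow_eq_zpow_sum, mul_comm (lam _)]
    rw [← Int.toNat_of_nonneg (hlam i).le, zpow_natCast, Units.val_pow_eq_pow_val,
      Units.val_mk0, Int.toNat_natCast]
  simpa [hc_pow] using hf (fun j => Units.mk0 c hc ^ lam j) x

/-- (Converse direction used in the proof of Lemma 1.1.) Over an infinite field, if some
one-parameter subgroup pairs strictly positively with all the weights, then every
invariant polynomial is constant. -/
theorem invariants_constant_of_contracting_ops (K : Type*) [Field K] [Infinite K]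
    (m r : ℕ) (hm : 0 < m) (hr : 0 < r) (w : Fin m → (Fin r → ℤ))
    (lam : Fin r → ℤ) (hlam : ∀ i : Fin m, (∑ j, w i j * lam j) > 0)
    (f : MvPolynomial (Fin m) K)
    (hf : ∀ (t : Fin r → Kˣ) (x : Fin m → K),
      MvPolynomial.eval (fun i => ((∏ j, (t j) ^ (w i j) : Kˣ) : K) * x i) f
        = ((∏ j, (t j) ^ ((0 : Fin r → ℤ) j) : Kˣ) : K) * MvPolynomial.eval x f) :
    f = MvPolynomial.C (MvPolynomial.coeff 0 f) :=
  invariants_constant_of_contracting_ops_general K m r w lam hlam f hf
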